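/- arXiv:1202.5587 — 4 statements merged into one kernel-verified Lean document; each statement's English description precedes it below -/
import Mathlib

section
/- Let H_1,…,H_k be finite simple graphs, where H_i has m_i vertices with 2 ≤ m_i ≤ m, let β_1,…,β_k be real numbers, and for X ⊆ E_n set K(X) = n² Σ_{i=1}^k β_i d(H_i,X). Then the Banach space norm ||K|| = sup_{e ∈ E_n} Σ_{X : e ∈ X} |K(X)| satisfies ||K|| ≤ m(m−1) Σ_{i=1}^k |β_i|. -/
open Finset

attribute [local instance] Classical.propDecidable

/-- `E_n`: the set of vertex pairs (2-element subsets) of `V_n = Fin n`, modeled as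
non-diagonal elements of `Sym2 (Fin n)`. -/
abbrev VertexPair (n : ℕ) := {e : Sym2 (Fin n) // ¬ e.IsDiag}

/-- Exact homomorphism density `d(H,X) = |ehom(H,X)| / n^{m'}`: maps `f : V(H) → V_n` that are
homomorphisms into the complete graph `K_n` and whose induced edge map sends `E(H)` onto `X`. -/
noncomputable def exactDensity {m' n : ℕ} (H : SimpleGraph (Fin m')) (X : Finset (VertexPair n)) :
    ℝ :=
  (Nat.card {f : Fin m' → Fin n //
      (∀ u v, H.Adj u v → f u ≠ f v) ∧
      Sym2.map f '' H.edgeSet = Subtype.val '' (X : Set (VertexPair n))} : ℝ) / (n : ℝ) ^ m'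

/-! For a fixed pair `e`, a proper map `f : V(H) → V_n` lies in `ehom(H, X)` for exactly one `X`,
namely its edge image, so summing `|ehom(H, X)|` over `X ∋ e` counts the proper maps whose edge
image contains `e`. Such a map sends some ordered pair of adjacent vertices of `H` to the ends of
`e`, after which only `n ^ (m' - 2)` choices remain; hence `n² Σ_{X ∋ e} d(H, X) ≤ m'(m' - 1)`,
and the triangle inequality over the `β_i` finishes the proof. -/

theorem card_filter_apply_eq_and_apply_eq_le {α β : Type*} [Fintype α] [DecidableEq α]
    [Fintype β] {u v : α} (huv : u ≠ v) (a b : β) :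
    #{f : α → β | f u = a ∧ f v = b} ≤ Fintype.card β ^ (Fintype.card α - 2) := by
  calc #{f : α → β | f u = a ∧ f v = b}
      ≤ #(univ : Finset (({u, v}ᶜ : Finset α) → β)) := by
        refine card_le_card_of_injOn (fun f x => f x) (fun _ _ => mem_univ _) ?_
        intro f hf g hg hfg
        simp only [coe_filter, mem_univ, true_and, Set.mem_ofPred_eq] at hf hg
        funext x
        by_cases hxu : x = u
        · rw [hxu, hf.1, hg.1]
        by_cases hxv : x = v
        · rw [hxv, hf.2, hg.2]
        exact congrFun hfg ⟨x, by simp [hxu, hxv]⟩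
    _ = Fintype.card β ^ (Fintype.card α - 2) := by
        rw [card_univ, Fintype.card_fun, Fintype.card_coe, card_compl, card_pair huv]

theorem card_filter_mem_map_edgeSet_le {V β : Type*} [Fintype V] [DecidableEq V] [Fintype β]
    (H : SimpleGraph V) (e : Sym2 β) :
    #{f : V → β | e ∈ Sym2.map f '' H.edgeSet} ≤
      Fintype.card V * (Fintype.card V - 1) * Fintype.card β ^ (Fintype.card V - 2) := by
  induction e using Sym2.ind with
  | _ a b =>
  have hcover : ({f : V → β | s(a, b) ∈ Sym2.map f '' H.edgeSet} : Finset (V → β)) ⊆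
      (univ : Finset V).offDiag.biUnion fun p => {f : V → β | f p.1 = a ∧ f p.2 = b} := by
    intro f hf
    obtain ⟨d, hd, hfd⟩ := (mem_filter.mp hf).2
    induction d using Sym2.ind with
    | _ u v =>
    rw [SimpleGraph.mem_edgeSet] at hd
    rw [Sym2.map_mk, Sym2.eq_iff] at hfd
    rw [mem_biUnion]
    rcases hfd with ⟨hu, hv⟩ | ⟨hv, hu⟩
    · exact ⟨(u, v), by simp [hd.ne], by simp [hu, hv]⟩
    · exact ⟨(v, u), by simp [hd.ne'], by simp [hu, hv]⟩
  calc _ ≤ _ := card_le_card hcover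
    _ ≤ ∑ p ∈ (univ : Finset V).offDiag, #{f : V → β | f p.1 = a ∧ f p.2 = b} :=
        card_biUnion_le
    _ ≤ ∑ p ∈ (univ : Finset V).offDiag, Fintype.card β ^ (Fintype.card V - 2) :=
        sum_le_sum fun p hp =>
          card_filter_apply_eq_and_apply_eq_le (mem_offDiag.mp hp).2.2 a b
    _ = _ := by
        rw [sum_const, smul_eq_mul, offDiag_card, card_univ, ← Nat.mul_sub_one]

noncomputable def edgeImage {V : Type*} {n : ℕ} (H : SimpleGraph V) (f : V → Fin n) :
    Finset (VertexPair n) :=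
  {p | p.val ∈ Sym2.map f '' H.edgeSet}

@[simp]
theorem mem_edgeImage {V : Type*} {n : ℕ} {H : SimpleGraph V} {f : V → Fin n}
    {p : VertexPair n} :
    p ∈ edgeImage H f ↔ p.val ∈ Sym2.map f '' H.edgeSet := by
  simp [edgeImage]

theorem map_edgeSet_eq_val_image_iff {V : Type*} {n : ℕ} {H : SimpleGraph V} {f : V → Fin n}
    (hf : ∀ u v, H.Adj u v → f u ≠ f v) (X : Finset (VertexPair n)) :
    Sym2.map f '' H.edgeSet = Subtype.val '' (X : Set (VertexPair n)) ↔ edgeImage H f = X := by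
  have himage :
      Sym2.map f '' H.edgeSet = Subtype.val '' (edgeImage H f : Set (VertexPair n)) := by
    ext q
    constructor
    · intro hq
      obtain ⟨d, hd, rfl⟩ := hq
      induction d using Sym2.ind with
      | _ u v =>
        exact ⟨⟨s(f u, f v), by simpa using hf u v hd⟩, by simpa using ⟨_, hd, rfl⟩, rfl⟩
    · rintro ⟨p, hp, rfl⟩
      simpa using hp
  rw [himage, Subtype.val_injective.image_injective.eq_iff, coe_inj]

theorem sum_exactDensity_eq {m' n : ℕ} (H : SimpleGraph (Fin m')) (e : VertexPair n) :
    ∑ X ∈ univ.filter (e ∈ ·), exactDensity H X =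
      #{f : Fin m' → Fin n | (∀ u v, H.Adj u v → f u ≠ f v) ∧ e.val ∈ Sym2.map f '' H.edgeSet} /
        (n : ℝ) ^ m' := by
  simp only [exactDensity, ← sum_div, Nat.card_eq_fintype_card, Fintype.card_subtype]
  congr 1
  rw [← Nat.cast_sum, Nat.cast_inj,
    card_eq_sum_card_fiberwise (f := edgeImage H) (t := univ.filter (e ∈ ·))]
  · refine sum_congr rfl fun X hX => (congrArg card ?_).symm
    ext f
    simp only [mem_filter, mem_univ, true_and] at hX ⊢
    constructor
    · rintro ⟨⟨hf, -⟩, rfl⟩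
      exact ⟨hf, (map_edgeSet_eq_val_image_iff hf _).2 rfl⟩
    · rintro ⟨hf, himage⟩
      obtain rfl := (map_edgeSet_eq_val_image_iff hf X).1 himage
      exact ⟨⟨hf, mem_edgeImage.1 hX⟩, rfl⟩
  · intro f hf
    simp only [coe_filter, mem_univ, true_and, Set.mem_ofPred_eq] at hf ⊢
    exact mem_edgeImage.2 hf.2

theorem sq_mul_sum_exactDensity_le {m' n : ℕ} (hm' : 2 ≤ m') (H : SimpleGraph (Fin m'))
    (e : VertexPair n) :
    (n : ℝ) ^ 2 * ∑ X ∈ univ.filter (e ∈ ·), exactDensity H X ≤ m' * (m' - 1 : ℝ) := by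
  have hcount : (#{f : Fin m' → Fin n | e.val ∈ Sym2.map f '' H.edgeSet} : ℝ) ≤
      m' * (m' - 1 : ℝ) * n ^ (m' - 2) := by
    have hle := card_filter_mem_map_edgeSet_le H e.val
    rw [Fintype.card_fin, Fintype.card_fin] at hle
    have hle' := (Nat.cast_le (α := ℝ)).2 hle
    push_cast [Nat.cast_sub (by omega : 1 ≤ m')] at hle'
    exact hle'
  rw [sum_exactDensity_eq]
  calc (n : ℝ) ^ 2 * (_ / (n : ℝ) ^ m')
      ≤ (n : ℝ) ^ 2 *
          (#{f : Fin m' → Fin n | e.val ∈ Sym2.map f '' H.edgeSet} / (n : ℝ) ^ m') := by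
        gcongr
        exact And.right
    _ ≤ (n : ℝ) ^ 2 * (m' * (m' - 1 : ℝ) * n ^ (m' - 2) / (n : ℝ) ^ m') := by gcongr
    _ = m' * (m' - 1 : ℝ) * ((n : ℝ) ^ m' / (n : ℝ) ^ m') := by
      rw [← Nat.add_sub_of_le hm', pow_add, Nat.add_sub_cancel_left]
      ring
    _ ≤ m' * (m' - 1 : ℝ) := by
      refine mul_le_of_le_one_right ?_ (div_self_le_one _)
      rw [← Nat.cast_descFactorial_two]
      positivity

theorem exactDensity_nonneg {m' n : ℕ} (H : SimpleGraph (Fin m')) (X : Finset (VertexPair n)) :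
    0 ≤ exactDensity H X := by
  unfold exactDensity
  positivity

theorem interaction_norm_bound_general {n k m : ℕ}
    (mi : Fin k → ℕ) (hmi : ∀ i, 2 ≤ mi i ∧ mi i ≤ m)
    (H : ∀ i, SimpleGraph (Fin (mi i))) (β : Fin k → ℝ) :
    (⨆ e : VertexPair n,
        ∑ X ∈ Finset.univ.filter (fun X : Finset (VertexPair n) => e ∈ X),
          |(n : ℝ) ^ 2 * ∑ i, β i * exactDensity (H i) X|) ≤
      (m : ℝ) * ((m : ℝ) - 1) * ∑ i, |β i| := by
  -- as the natural number `m.descFactorial 2`, `m (m - 1)` is visibly nonnegative and monotone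
  rw [← Nat.cast_descFactorial_two]
  refine Real.iSup_le (fun e => ?_) (by positivity)
  have hdensity_bound : ∀ i, (n : ℝ) ^ 2 * ∑ X ∈ univ.filter (e ∈ ·), exactDensity (H i) X ≤
      m.descFactorial 2 := fun i => by
    refine (sq_mul_sum_exactDensity_le (hmi i).1 (H i) e).trans ?_
    rw [← Nat.cast_descFactorial_two]
    exact_mod_cast Nat.descFactorial_le 2 (hmi i).2
  calc ∑ X ∈ univ.filter (e ∈ ·), |(n : ℝ) ^ 2 * ∑ i, β i * exactDensity (H i) X|
      ≤ ∑ X ∈ univ.filter (e ∈ ·), ∑ i, |β i| * ((n : ℝ) ^ 2 * exactDensity (H i) X) := by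
        gcongr with X
        rw [mul_sum]
        refine (abs_sum_le_sum_abs _ _).trans_eq (sum_congr rfl fun i _ => ?_)
        rw [mul_left_comm, abs_mul,
          abs_of_nonneg (mul_nonneg (sq_nonneg _) (exactDensity_nonneg (H i) X))]
    _ = ∑ i, |β i| * ((n : ℝ) ^ 2 * ∑ X ∈ univ.filter (e ∈ ·), exactDensity (H i) X) := by
        rw [sum_comm]
        simp only [mul_sum]
    _ ≤ ∑ i, |β i| * m.descFactorial 2 := by gcongr with i; exact hdensity_bound i
    _ = m.descFactorial 2 * ∑ i, |β i| := by rw [← sum_mul, mul_comm]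

/-- for the interaction `K(X) = n² Σ_{i=1}^k β_i d(H_i,X)`, the Banach space norm
`||K|| = sup_{e ∈ E_n} Σ_{X : e ∈ X} |K(X)|` satisfies `||K|| ≤ m(m−1) Σ_{i=1}^k |β_i|`. -/
theorem interaction_norm_bound {n k m : ℕ} (hn : 1 ≤ n)
    (mi : Fin k → ℕ) (hmi : ∀ i, 2 ≤ mi i ∧ mi i ≤ m)
    (H : ∀ i, SimpleGraph (Fin (mi i))) (β : Fin k → ℝ) :
    (⨆ e : VertexPair n,
        ∑ X ∈ Finset.univ.filter (fun X : Finset (VertexPair n) => e ∈ X),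
          |(n : ℝ) ^ 2 * ∑ i, β i * exactDensity (H i) X|) ≤
      (m : ℝ) * ((m : ℝ) - 1) * ∑ i, |β i| :=
  interaction_norm_bound_general mi hmi H β
end

section
/- Let E be a finite set, let p ≥ 2 be an integer, M > 1, and let K : {X : X ⊆ E} → ℝ satisfy K(X) = 0 whenever |X| > p. Define ||K|| = sup_{e ∈ E} Σ_{X : e ∈ X} |K(X)| and, for nonempty N ⊆ E, v_N = Σ_{Γ connected, ∪Γ = N} Π_{X ∈ Γ}(e^{|K(X)|} − 1). If ||K|| ≤ (log M)(p−1)^p / (2(Mp)^p (1 + (p−1) log M)), then for every e ∈ E, Σ_{N : e ∈ N} v_N M^{|N|} ≤ log M. -/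
/-!
Write `Ψ_Λ(e)` for the sum of `∏_{X ∈ Γ} w(X) · M^{|∪Γ|}`, `w(X) = e^{|K(X)|} - 1`, over the
connected hypergraphs `Γ` with `e ∈ ∪Γ ⊆ Λ`; the claim is `Ψ_E(e) ≤ log M`. We show
`Ψ_Λ(e) ≤ a := min (log M) (1/(p-1))` by induction on `Λ`.

Split a cluster `Γ` into the links `Δ` through `e` and the rest. Each connected component of the
rest touches `∪Δ \ {e}`; pinned to one such point, different components get different pins, and
each is a cluster in `Λ \ {e}` rooted at its pin. Hence
`Ψ_Λ(e) ≤ ∑_Δ ∏_Δ w · M^{|∪Δ|} ∏_{f ∈ ∪Δ \ {e}} (1 + Ψ_{Λ \ {e}}(f))`, which by induction and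
`|∪Δ| - 1 ≤ ∑_{X ∈ Δ} (|X| - 1)` is at most `M (∏_{X ∋ e} (1 + w(X) (M(1+a))^{|X|-1}) - 1)`,
hence at most `M (exp T - 1)` with `T = ‖K‖ e^{‖K‖} (M(1+a))^{p-1}`, as only links with at most
`p` points carry weight. The bound on `‖K‖` is what makes `M (exp T - 1) ≤ a`.
-/

open Finset

attribute [local instance] Classical.propDecidable

/-- A hypergraph `Γ` (a finite collection of subsets/links of `E`) is connected if its support
`∪Γ` is nonempty and cannot be partitioned into two nonempty disjoint parts such that every
link lies entirely inside one of the two parts. -/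
def HyperConnected {E : Type*} [DecidableEq E] (Γ : Finset (Finset E)) : Prop :=
  (Γ.sup id).Nonempty ∧
    ∀ A B : Finset E, A ∪ B = Γ.sup id → Disjoint A B → A.Nonempty → B.Nonempty →
      ∃ X ∈ Γ, ¬ X ⊆ A ∧ ¬ X ⊆ B

/-- The activity `v_N = Σ_{Γ connected, ∪Γ = N} Π_{X ∈ Γ} (e^{|K(X)|} − 1)`. -/
noncomputable def clusterV {E : Type*} [Fintype E] [DecidableEq E] (K : Finset E → ℝ)
    (N : Finset E) : ℝ :=
  ∑ Γ ∈ Finset.univ.filter (fun Γ : Finset (Finset E) =>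
      (∀ X ∈ Γ, X.Nonempty) ∧ HyperConnected Γ ∧ Γ.sup id = N),
    ∏ X ∈ Γ, (Real.exp |K X| - 1)

namespace ClusterExpansion

section Components

variable {E : Type*} [DecidableEq E] {G : Finset (Finset E)} {A B X Y Z : Finset E}

def LinkAdj (G : Finset (Finset E)) (X Y : Finset E) : Prop :=
  X ∈ G ∧ Y ∈ G ∧ (X ∩ Y).Nonempty

lemma LinkAdj.symm (h : LinkAdj G X Y) : LinkAdj G Y X :=
  ⟨h.2.1, h.1, inter_comm X Y ▸ h.2.2⟩

lemma reflTransGen_linkAdj_symm (h : Relation.ReflTransGen (LinkAdj G) X Y) :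
    Relation.ReflTransGen (LinkAdj G) Y X := by
  induction h with
  | refl => exact .refl
  | tail _ hab ih => exact .head hab.symm ih

noncomputable def linkComponent (G : Finset (Finset E)) (X : Finset E) : Finset (Finset E) :=
  G.filter (Relation.ReflTransGen (LinkAdj G) X)

lemma mem_linkComponent : Y ∈ linkComponent G X ↔ Y ∈ G ∧ Relation.ReflTransGen (LinkAdj G) X Y :=
  mem_filter

lemma self_mem_linkComponent (hX : X ∈ G) : X ∈ linkComponent G X :=
  mem_linkComponent.2 ⟨hX, .refl⟩

lemma linkComponent_subset : linkComponent G X ⊆ G := filter_subset _ _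

lemma linkComponent_eq_of_reflTransGen (h : Relation.ReflTransGen (LinkAdj G) X Y) :
    linkComponent G X = linkComponent G Y := by
  ext Z
  simp only [mem_linkComponent]
  exact and_congr_right fun _ =>
    ⟨(reflTransGen_linkAdj_symm h).trans, h.trans⟩

lemma mem_linkComponent_of_inter_support (hZ : Z ∈ G)
    (h : (Z ∩ (linkComponent G X).sup id).Nonempty) : Z ∈ linkComponent G X := by
  obtain ⟨v, hv⟩ := h
  obtain ⟨hvZ, hv⟩ := mem_inter.1 hv
  obtain ⟨W, hW, hvW⟩ := mem_sup.1 hv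
  obtain ⟨hWG, hXW⟩ := mem_linkComponent.1 hW
  exact mem_linkComponent.2 ⟨hZ, hXW.tail ⟨hWG, hZ, v, mem_inter.2 ⟨hvW, hvZ⟩⟩⟩

lemma linkComponent_eq_of_support_inter
    (h : ((linkComponent G X).sup id ∩ (linkComponent G Y).sup id).Nonempty) :
    linkComponent G X = linkComponent G Y := by
  obtain ⟨v, hv⟩ := h
  obtain ⟨hvX, hvY⟩ := mem_inter.1 hv
  obtain ⟨W, hW, hvW⟩ := mem_sup.1 hvY
  have hWX := mem_linkComponent_of_inter_support (linkComponent_subset hW)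
    ⟨v, mem_inter.2 ⟨hvW, hvX⟩⟩
  exact (linkComponent_eq_of_reflTransGen (mem_linkComponent.1 hWX).2).trans
    (linkComponent_eq_of_reflTransGen (mem_linkComponent.1 hW).2).symm

/-- Intersecting links cannot lie on different sides of a partition. -/
lemma sup_linkComponent_subset (hAB : Disjoint A B)
    (hside : ∀ Z ∈ linkComponent G X, Z ⊆ A ∨ Z ⊆ B) (hXA : X ⊆ A) :
    (linkComponent G X).sup id ⊆ A := by
  refine Finset.sup_le fun Z hZ => ?_
  induction (mem_linkComponent.1 hZ).2 with
  | refl => exact hXA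
  | @tail W V hXW hWV ih =>
    obtain ⟨hWG, hVG, v, hv⟩ := hWV
    have hWA : W ⊆ A := ih (mem_linkComponent.2 ⟨hWG, hXW⟩)
    refine (hside V hZ).resolve_right fun hVB => ?_
    rw [mem_inter] at hv
    exact disjoint_left.1 hAB (hWA hv.1) (hVB hv.2)

lemma hyperConnected_linkComponent (hne : ∀ Y ∈ G, Y.Nonempty) (hX : X ∈ G) :
    HyperConnected (linkComponent G X) := by
  refine ⟨(hne X hX).mono (le_sup (f := id) (self_mem_linkComponent hX)), ?_⟩
  intro A B hsupp hAB hA hB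
  by_contra! hside
  replace hside : ∀ Z ∈ linkComponent G X, Z ⊆ A ∨ Z ⊆ B := fun Z hZ =>
    or_iff_not_imp_left.2 (hside Z hZ)
  rcases hside X (self_mem_linkComponent hX) with hXA | hXB
  · obtain ⟨b, hb⟩ := hB
    have := sup_linkComponent_subset hAB hside hXA (hsupp ▸ mem_union_right A hb)
    exact disjoint_left.1 hAB this hb
  · obtain ⟨a, ha⟩ := hA
    have := sup_linkComponent_subset hAB.symm (fun Z hZ => (hside Z hZ).symm) hXB
      (hsupp ▸ mem_union_left B ha)
    exact disjoint_left.1 hAB ha this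

end Components

section Pinning

variable {E : Type*} [DecidableEq E] {e f : E} {Γ : Finset (Finset E)} {Y Z : Finset E}

noncomputable def attachPoints (e : E) (Γ : Finset (Finset E)) (Y : Finset E) : Finset E :=
  (linkComponent (Γ.filter (e ∉ ·)) Y).sup id ∩ ((Γ.filter (e ∈ ·)).sup id).erase e

/-- The default `e` is a junk value: for connected `Γ` it is never used
(`attachPoints_nonempty`). -/
noncomputable def pin (e : E) (Γ : Finset (Finset E)) (Y : Finset E) : E :=
  if h : (attachPoints e Γ Y).Nonempty then h.choose else e

noncomputable def pinnedPart (e : E) (Γ : Finset (Finset E)) (f : E) : Finset (Finset E) :=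
  (Γ.filter (e ∉ ·)).filter (pin e Γ · = f)

/-- Separating the component of `Y` from the rest of the support of a connected `Γ`, some link
must cross; it cannot avoid `e`, so it passes through `e` and meets the component off `e`. -/
lemma attachPoints_nonempty (hne : ∀ X ∈ Γ, X.Nonempty) (hconn : HyperConnected Γ)
    (he : e ∈ Γ.sup id) (hY : Y ∈ Γ.filter (e ∉ ·)) : (attachPoints e Γ Y).Nonempty := by
  set A := (linkComponent (Γ.filter (e ∉ ·)) Y).sup id
  have hAsub : A ⊆ Γ.sup id := sup_mono (linkComponent_subset.trans (filter_subset _ _))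
  have heA : e ∉ A := fun h => by
    obtain ⟨W, hW, heW⟩ := mem_sup.1 h
    exact (mem_filter.1 (linkComponent_subset hW)).2 heW
  have hA : A.Nonempty :=
    (hne Y (mem_filter.1 hY).1).mono (le_sup (f := id) (self_mem_linkComponent hY))
  obtain ⟨X, hXΓ, hXA, hXB⟩ := hconn.2 A (Γ.sup id \ A) (union_sdiff_of_subset hAsub)
    disjoint_sdiff hA ⟨e, mem_sdiff.2 ⟨he, heA⟩⟩
  obtain ⟨v, hvX, hvB⟩ := not_subset.1 hXB
  have hvA : v ∈ A := by
    by_contra hvA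
    exact hvB (mem_sdiff.2 ⟨le_sup (f := id) hXΓ hvX, hvA⟩)
  have heX : e ∈ X := by
    by_contra heX
    exact hXA (le_sup (f := id) (mem_linkComponent_of_inter_support
      (mem_filter.2 ⟨hXΓ, heX⟩) ⟨v, mem_inter.2 ⟨hvX, hvA⟩⟩))
  exact ⟨v, mem_inter.2 ⟨hvA, mem_erase.2
    ⟨ne_of_mem_of_not_mem hvA heA, le_sup (f := id) (mem_filter.2 ⟨hXΓ, heX⟩) hvX⟩⟩⟩

lemma pin_mem_attachPoints (h : (attachPoints e Γ Y).Nonempty) :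
    pin e Γ Y ∈ attachPoints e Γ Y := by
  rw [pin, dif_pos h]
  exact h.choose_spec

lemma pin_eq_of_mem_linkComponent (h : Z ∈ linkComponent (Γ.filter (e ∉ ·)) Y) :
    pin e Γ Z = pin e Γ Y := by
  have h : attachPoints e Γ Z = attachPoints e Γ Y := by
    rw [attachPoints, attachPoints, linkComponent_eq_of_reflTransGen (mem_linkComponent.1 h).2]
  simp only [pin, h]

/-- Distinct components have disjoint supports, so they receive distinct pins. -/
lemma pinnedPart_eq_linkComponent (hne : ∀ X ∈ Γ, X.Nonempty) (hconn : HyperConnected Γ)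
    (he : e ∈ Γ.sup id) (hY : Y ∈ pinnedPart e Γ f) :
    pinnedPart e Γ f = linkComponent (Γ.filter (e ∉ ·)) Y ∧ f ∈ attachPoints e Γ Y := by
  obtain ⟨hYG, rfl⟩ := mem_filter.1 hY
  have hpinY := pin_mem_attachPoints (attachPoints_nonempty hne hconn he hYG)
  refine ⟨?_, hpinY⟩
  ext Z
  unfold pinnedPart
  rw [mem_filter]
  constructor
  · rintro ⟨hZG, hpin⟩
    have hpinZ := pin_mem_attachPoints (attachPoints_nonempty hne hconn he hZG)
    rw [hpin] at hpinZ
    rw [linkComponent_eq_of_support_inter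
      ⟨pin e Γ Y, mem_inter.2 ⟨(mem_inter.1 hpinY).1, (mem_inter.1 hpinZ).1⟩⟩]
    exact self_mem_linkComponent hZG
  · intro hZ
    exact ⟨linkComponent_subset hZ, pin_eq_of_mem_linkComponent hZ⟩

lemma filter_union_biUnion_pinnedPart [Fintype E] (e : E) (Γ : Finset (Finset E)) :
    Γ.filter (e ∈ ·) ∪ univ.biUnion (pinnedPart e Γ) = Γ := by
  unfold pinnedPart
  rw [biUnion_filter_eq_of_maps_to fun _ _ => mem_univ _,
    filter_union_filter_not_eq]

end Pinning

section Weight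

variable {E : Type*} [DecidableEq E] {w : Finset E → ℝ} {M : ℝ}

def clusterWeight (w : Finset E → ℝ) (M : ℝ) (Γ : Finset (Finset E)) : ℝ :=
  (∏ X ∈ Γ, w X) * M ^ (Γ.sup id).card

lemma clusterWeight_nonneg (hw : ∀ X, 0 ≤ w X) (hM : 0 ≤ M) (Γ : Finset (Finset E)) :
    0 ≤ clusterWeight w M Γ :=
  mul_nonneg (prod_nonneg fun X _ => hw X) (pow_nonneg hM _)

@[simp]
lemma clusterWeight_empty : clusterWeight w M ∅ = 1 := by
  simp [clusterWeight]

lemma clusterWeight_le_mul_filter (hw : ∀ X, 0 ≤ w X) (hM : 1 ≤ M) (P : Finset E → Prop)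
    [DecidablePred P] (Γ : Finset (Finset E)) :
    clusterWeight w M Γ ≤ clusterWeight w M (Γ.filter P) * clusterWeight w M (Γ.filter (¬P ·)) := by
  have hcard : (Γ.sup id).card ≤ ((Γ.filter P).sup id).card + ((Γ.filter (¬P ·)).sup id).card := by
    conv_lhs => rw [← filter_union_filter_not_eq P Γ, sup_union]
    exact card_union_le _ _
  calc clusterWeight w M Γ
      ≤ (∏ X ∈ Γ, w X) * M ^ (((Γ.filter P).sup id).card + ((Γ.filter (¬P ·)).sup id).card) :=
        mul_le_mul_of_nonneg_left (pow_le_pow_right₀ hM hcard) (prod_nonneg fun X _ => hw X)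
    _ = _ := by
        rw [clusterWeight, clusterWeight, ← prod_filter_mul_prod_filter_not Γ P, pow_add]
        ring

lemma clusterWeight_le_prod_fiberwise {ι : Type*} [Fintype ι] [DecidableEq ι]
    (hw : ∀ X, 0 ≤ w X) (hM : 1 ≤ M) (Γ : Finset (Finset E)) (g : Finset E → ι) :
    clusterWeight w M Γ ≤ ∏ i, clusterWeight w M (Γ.filter (g · = i)) := by
  have hcard : (Γ.sup id).card ≤ ∑ i, ((Γ.filter (g · = i)).sup id).card := by
    conv_lhs =>
      rw [← biUnion_filter_eq_of_maps_to (s := Γ) (t := univ) (f := g) fun _ _ => mem_univ _]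
    rw [sup_biUnion, sup_eq_biUnion]
    exact card_biUnion_le
  simp only [clusterWeight]
  rw [prod_mul_distrib, prod_pow_eq_pow_sum, prod_fiberwise Γ g w]
  exact mul_le_mul_of_nonneg_left (pow_le_pow_right₀ hM hcard) (prod_nonneg fun X _ => hw X)

lemma clusterWeight_le_pinnedPart [Fintype E] (hw : ∀ X, 0 ≤ w X) (hM : 1 ≤ M) (e : E)
    (Γ : Finset (Finset E)) :
    clusterWeight w M Γ ≤
      clusterWeight w M (Γ.filter (e ∈ ·)) * ∏ f, clusterWeight w M (pinnedPart e Γ f) :=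
  (clusterWeight_le_mul_filter hw hM _ Γ).trans <| mul_le_mul_of_nonneg_left
    (clusterWeight_le_prod_fiberwise hw hM _ _) (clusterWeight_nonneg hw (by linarith) _)

lemma card_sup_erase_le_sum_card_erase (Δ : Finset (Finset E)) (e : E) :
    ((Δ.sup id).erase e).card ≤ ∑ X ∈ Δ, (X.erase e).card := by
  refine (card_le_card fun v hv => ?_).trans card_biUnion_le
  obtain ⟨hve, hv⟩ := mem_erase.1 hv
  obtain ⟨X, hX, hvX⟩ := mem_sup.1 hv
  exact mem_biUnion.2 ⟨X, hX, mem_erase.2 ⟨hve, hvX⟩⟩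

lemma clusterWeight_mul_prod_le {a : ℝ} (hw : ∀ X, 0 ≤ w X) (hM : 1 ≤ M) (ha : 0 ≤ a) {e : E}
    {Δ : Finset (Finset E)} (hΔ : ∀ X ∈ Δ, e ∈ X) {g : E → ℝ} (hg0 : ∀ f, 0 ≤ g f)
    (hga : ∀ f, g f ≤ a) :
    clusterWeight w M Δ * ∏ f ∈ (Δ.sup id).erase e, (1 + g f) ≤
      M * ∏ X ∈ Δ, w X * (M * (1 + a)) ^ (X.card - 1) := by
  set n := ((Δ.sup id).erase e).card
  have hw0 : 0 ≤ ∏ X ∈ Δ, w X := prod_nonneg fun X _ => hw X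
  have hpow : M ^ (Δ.sup id).card ≤ M * M ^ n := by
    rw [← pow_succ']
    exact pow_le_pow_right₀ hM (by have := pred_card_le_card_erase (s := Δ.sup id) (a := e); omega)
  have hprod : ∏ f ∈ (Δ.sup id).erase e, (1 + g f) ≤ (1 + a) ^ n := by
    rw [← prod_const]
    exact prod_le_prod (fun f _ => by linarith [hg0 f]) fun f _ => by linarith [hga f]
  have hexp : (M * (1 + a)) ^ n ≤ ∏ X ∈ Δ, (M * (1 + a)) ^ (X.card - 1) := by
    rw [prod_pow_eq_pow_sum]
    refine pow_le_pow_right₀ (by nlinarith) ((card_sup_erase_le_sum_card_erase Δ e).trans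
      (sum_le_sum fun X hX => ?_))
    rw [card_erase_of_mem (hΔ X hX)]
  calc clusterWeight w M Δ * ∏ f ∈ (Δ.sup id).erase e, (1 + g f)
      ≤ (∏ X ∈ Δ, w X) * (M * M ^ n) * (1 + a) ^ n :=
        mul_le_mul (mul_le_mul_of_nonneg_left hpow hw0) hprod
          (prod_nonneg fun f _ => by linarith [hg0 f]) (by positivity)
    _ = M * ((∏ X ∈ Δ, w X) * (M * (1 + a)) ^ n) := by rw [mul_pow]; ring
    _ ≤ M * ((∏ X ∈ Δ, w X) * ∏ X ∈ Δ, (M * (1 + a)) ^ (X.card - 1)) := by gcongr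
    _ = M * ∏ X ∈ Δ, w X * (M * (1 + a)) ^ (X.card - 1) := by rw [prod_mul_distrib]

end Weight

lemma sum_piFinset_ite_insert_prod {ι α R : Type*} [Fintype ι] [DecidableEq ι] [DecidableEq α]
    [CommSemiring R] (T : Finset ι) (c : ι → Finset α) (a : α) (ha : ∀ i, a ∉ c i)
    (F : α → R) (hF : F a = 1) :
    ∑ γ ∈ Fintype.piFinset (fun i => if i ∈ T then insert a (c i) else {a}), ∏ i, F (γ i) =
      ∏ i ∈ T, (1 + ∑ x ∈ c i, F x) := by
  rw [← prod_univ_sum]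
  conv_rhs => rw [← univ_inter T, ← prod_ite_mem]
  refine prod_congr rfl fun i _ => ?_
  split_ifs
  · rw [sum_insert (ha i), hF]
  · rw [sum_singleton, hF]

lemma sum_powerset_erase_empty_prod {ι R : Type*} [DecidableEq ι] [CommRing R] (s : Finset ι)
    (f : ι → R) : ∑ t ∈ s.powerset.erase ∅, ∏ i ∈ t, f i = ∏ i ∈ s, (1 + f i) - 1 := by
  rw [prod_one_add, ← sum_erase_add _ _ (empty_mem_powerset s), prod_empty, add_sub_cancel_right]

section Recursion

variable {E : Type*} [Fintype E] [DecidableEq E] {w : Finset E → ℝ} {M a : ℝ} {Λ : Finset E}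
  {e : E} {Γ : Finset (Finset E)}

noncomputable def rootedClusters (Λ : Finset E) (e : E) : Finset (Finset (Finset E)) :=
  univ.filter fun Γ => (∀ X ∈ Γ, X.Nonempty) ∧ HyperConnected Γ ∧ e ∈ Γ.sup id ∧ Γ.sup id ⊆ Λ

noncomputable def rootedClusterSum (w : Finset E → ℝ) (M : ℝ) (Λ : Finset E) (e : E) : ℝ :=
  ∑ Γ ∈ rootedClusters Λ e, clusterWeight w M Γ

noncomputable def rootedLinks (Λ : Finset E) (e : E) : Finset (Finset E) :=
  univ.filter fun X => e ∈ X ∧ X ⊆ Λ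

lemma mem_rootedClusters : Γ ∈ rootedClusters Λ e ↔
    (∀ X ∈ Γ, X.Nonempty) ∧ HyperConnected Γ ∧ e ∈ Γ.sup id ∧ Γ.sup id ⊆ Λ := by
  simp [rootedClusters]

lemma mem_rootedLinks {X : Finset E} : X ∈ rootedLinks Λ e ↔ e ∈ X ∧ X ⊆ Λ := by
  simp [rootedLinks]

lemma empty_notMem_rootedClusters : ∅ ∉ rootedClusters Λ e := fun h =>
  not_nonempty_empty (mem_rootedClusters.1 h).2.1.1

lemma rootedClusterSum_nonneg (hw : ∀ X, 0 ≤ w X) (hM : 0 ≤ M) :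
    0 ≤ rootedClusterSum w M Λ e :=
  sum_nonneg fun Γ _ => clusterWeight_nonneg hw hM Γ

lemma rootedClusterSum_of_notMem (he : e ∉ Λ) : rootedClusterSum w M Λ e = 0 := by
  refine sum_eq_zero fun Γ hΓ => absurd ?_ he
  obtain ⟨-, -, heΓ, hΓΛ⟩ := mem_rootedClusters.1 hΓ
  exact hΓΛ heΓ

lemma filter_mem_rootedLinks (hΓ : Γ ∈ rootedClusters Λ e) :
    Γ.filter (e ∈ ·) ∈ (rootedLinks Λ e).powerset.erase ∅ := by
  obtain ⟨-, -, he, hΓΛ⟩ := mem_rootedClusters.1 hΓ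
  obtain ⟨X, hX, heX⟩ := mem_sup.1 he
  refine mem_erase.2 ⟨nonempty_iff_ne_empty.1 ⟨X, mem_filter.2 ⟨hX, heX⟩⟩,
    mem_powerset.2 fun Y hY => ?_⟩
  obtain ⟨hYΓ, heY⟩ := mem_filter.1 hY
  exact mem_rootedLinks.2 ⟨heY, (le_sup (f := id) hYΓ).trans hΓΛ⟩

lemma pinnedPart_mem_rootedClusters (hΓ : Γ ∈ rootedClusters Λ e) (f : E)
    (hf : (pinnedPart e Γ f).Nonempty) :
    f ∈ ((Γ.filter (e ∈ ·)).sup id).erase e ∧ pinnedPart e Γ f ∈ rootedClusters (Λ.erase e) f := by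
  obtain ⟨hne, hconn, he, hΓΛ⟩ := mem_rootedClusters.1 hΓ
  obtain ⟨Y, hY⟩ := hf
  obtain ⟨hpart, hfY⟩ := pinnedPart_eq_linkComponent hne hconn he hY
  obtain ⟨hfC, hfΔ⟩ := mem_inter.1 hfY
  have hneG : ∀ X ∈ Γ.filter (e ∉ ·), X.Nonempty := fun X hX => hne X (mem_filter.1 hX).1
  refine ⟨hfΔ, mem_rootedClusters.2 ⟨?_, ?_, hpart ▸ hfC, ?_⟩⟩
  · exact fun X hX => hneG X (linkComponent_subset (hpart ▸ hX))
  · exact hpart ▸ hyperConnected_linkComponent hneG (mem_filter.1 hY).1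
  · rw [hpart]
    refine Finset.sup_le fun X hX => ?_
    obtain ⟨hXΓ, heX⟩ := mem_filter.1 (linkComponent_subset hX)
    exact fun v hv => mem_erase.2 ⟨ne_of_mem_of_not_mem hv heX, hΓΛ (le_sup (f := id) hXΓ hv)⟩

lemma sum_rootedClusters_filter_eq_le (hw : ∀ X, 0 ≤ w X) (hM : 1 ≤ M) (Λ : Finset E) (e : E)
    (Δ : Finset (Finset E)) :
    ∑ Γ ∈ (rootedClusters Λ e).filter (·.filter (e ∈ ·) = Δ), clusterWeight w M Γ ≤
      clusterWeight w M Δ * ∏ f ∈ (Δ.sup id).erase e, (1 + rootedClusterSum w M (Λ.erase e) f) := by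
  set S := (rootedClusters Λ e).filter (·.filter (e ∈ ·) = Δ)
  set T := (Δ.sup id).erase e
  set choices : E → Finset (Finset (Finset E)) := fun f =>
    if f ∈ T then insert ∅ (rootedClusters (Λ.erase e) f) else {∅}
  have hW0 : ∀ Γ, 0 ≤ clusterWeight w M Γ := clusterWeight_nonneg hw (zero_le_one.trans hM)
  have hinj : Set.InjOn (pinnedPart e) S := by
    intro Γ₁ h₁ Γ₂ h₂ h
    rw [← filter_union_biUnion_pinnedPart e Γ₁, ← filter_union_biUnion_pinnedPart e Γ₂, h,
      (mem_filter.1 h₁).2, (mem_filter.1 h₂).2]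
  have hmaps : ∀ Γ ∈ S, pinnedPart e Γ ∈ Fintype.piFinset choices := by
    intro Γ hΓ
    obtain ⟨hΓ, hΔ⟩ := mem_filter.1 hΓ
    refine Fintype.mem_piFinset.2 fun f => ?_
    rcases (pinnedPart e Γ f).eq_empty_or_nonempty with h | h
    · rw [h]
      simp only [choices]
      split_ifs <;> simp
    · obtain ⟨hfT, hmem⟩ := pinnedPart_mem_rootedClusters hΓ f h
      rw [hΔ] at hfT
      simp only [choices]
      rw [if_pos (show f ∈ T from hfT)]
      exact mem_insert_of_mem hmem
  calc ∑ Γ ∈ S, clusterWeight w M Γ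
      ≤ ∑ Γ ∈ S, clusterWeight w M Δ * ∏ f, clusterWeight w M (pinnedPart e Γ f) :=
        sum_le_sum fun Γ hΓ => (mem_filter.1 hΓ).2 ▸ clusterWeight_le_pinnedPart hw hM e Γ
    _ = ∑ γ ∈ S.image (pinnedPart e), clusterWeight w M Δ * ∏ f, clusterWeight w M (γ f) := by
        rw [sum_image hinj]
    _ ≤ ∑ γ ∈ Fintype.piFinset choices, clusterWeight w M Δ * ∏ f, clusterWeight w M (γ f) :=
        sum_le_sum_of_subset_of_nonneg (image_subset_iff.2 hmaps)
          fun γ _ _ => mul_nonneg (hW0 Δ) (prod_nonneg fun f _ => hW0 _)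
    _ = _ := by
        rw [← mul_sum, sum_piFinset_ite_insert_prod T _ ∅ (fun _ => empty_notMem_rootedClusters)
          _ clusterWeight_empty]
        rfl

lemma rootedClusterSum_le (hw : ∀ X, 0 ≤ w X) (hM : 1 ≤ M) (Λ : Finset E) (e : E) :
    rootedClusterSum w M Λ e ≤ ∑ Δ ∈ (rootedLinks Λ e).powerset.erase ∅,
      clusterWeight w M Δ * ∏ f ∈ (Δ.sup id).erase e, (1 + rootedClusterSum w M (Λ.erase e) f) := by
  rw [rootedClusterSum, ← sum_fiberwise_of_maps_to fun Γ hΓ => filter_mem_rootedLinks hΓ]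
  exact sum_le_sum fun Δ _ => sum_rootedClusters_filter_eq_le hw hM Λ e Δ

theorem rootedClusterSum_le_of_forall (hw : ∀ X, 0 ≤ w X) (hM : 1 ≤ M) (ha : 0 ≤ a)
    (h : ∀ e, M * (Real.exp (∑ X ∈ univ.filter (e ∈ ·), w X * (M * (1 + a)) ^ (X.card - 1)) - 1)
      ≤ a) (Λ : Finset E) (e : E) : rootedClusterSum w M Λ e ≤ a := by
  induction Λ using Finset.strongInduction generalizing e with
  | H Λ ih =>
  by_cases he : e ∈ Λ
  swap
  · rw [rootedClusterSum_of_notMem he]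
    exact ha
  set τ : Finset E → ℝ := fun X => w X * (M * (1 + a)) ^ (X.card - 1)
  have hτ : ∀ X, 0 ≤ τ X := fun X => mul_nonneg (hw X) (pow_nonneg (by nlinarith) _)
  calc rootedClusterSum w M Λ e
      ≤ ∑ Δ ∈ (rootedLinks Λ e).powerset.erase ∅, M * ∏ X ∈ Δ, τ X := by
        refine (rootedClusterSum_le hw hM Λ e).trans (sum_le_sum fun Δ hΔ => ?_)
        refine clusterWeight_mul_prod_le hw hM ha (fun X hX => ?_)
          (fun f => rootedClusterSum_nonneg hw (by linarith)) (fun f => ih _ (erase_ssubset he) f)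
        exact (mem_rootedLinks.1 (mem_powerset.1 (mem_erase.1 hΔ).2 hX)).1
    _ = M * (∏ X ∈ rootedLinks Λ e, (1 + τ X) - 1) := by
        rw [← mul_sum, sum_powerset_erase_empty_prod]
    _ ≤ M * (Real.exp (∑ X ∈ rootedLinks Λ e, τ X) - 1) := by
        gcongr
        exact Real.prod_one_add_le_exp_sum _ hτ
    _ ≤ M * (Real.exp (∑ X ∈ univ.filter (e ∈ ·), τ X) - 1) := by
        gcongr
        · exact fun X _ _ => hτ X
        · exact fun X hX => mem_filter.2 ⟨mem_univ _, (mem_rootedLinks.1 hX).1⟩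
    _ ≤ a := h e

end Recursion

section Numerics

open Real

lemma exp_sub_one_le_mul_exp (x : ℝ) : exp x - 1 ≤ x * exp x := by
  have h := mul_le_mul_of_nonneg_left (add_one_le_exp (-x)) (exp_pos x).le
  rw [← exp_add, add_neg_cancel, exp_zero] at h
  linarith

/-- With `b = a / (2M)`: `ε ≤ b` and `T := ε e^ε c ≤ 2b`, so `e^{ε + T} ≤ e^{3/5} ≤ 2` and
`M (e^T - 1) ≤ M T e^T ≤ M b e^{ε + T} = (a/2) e^{ε + T} ≤ a`. -/
lemma mul_exp_sub_one_le {M a ε c : ℝ} (hM : 0 < M) (hε : 0 ≤ ε) (hc : 1 ≤ c)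
    (h : ε * c ≤ a / (2 * M)) (hsmall : a / (2 * M) ≤ 1 / 5) :
    M * (exp (ε * exp ε * c) - 1) ≤ a := by
  set b := a / (2 * M)
  set T := ε * exp ε * c
  have hεb : ε ≤ b := (le_mul_of_one_le_right hε hc).trans h
  have hlog2 := log_two_gt_d9
  have hexpε : exp ε ≤ 2 := by
    calc exp ε ≤ exp (log 2) := exp_le_exp.2 (by linarith)
      _ = 2 := exp_log two_pos
  have hTb : T ≤ exp ε * b := by
    calc T = exp ε * (ε * c) := by ring
      _ ≤ exp ε * b := mul_le_mul_of_nonneg_left h (exp_pos ε).le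
  have hT2b : T ≤ 2 * b := hTb.trans (mul_le_mul_of_nonneg_right hexpε (hε.trans hεb))
  have hexp : exp (ε + T) ≤ 2 := by
    calc exp (ε + T) ≤ exp (log 2) := exp_le_exp.2 (by linarith)
      _ = 2 := exp_log two_pos
  have ha : 0 ≤ a := by
    simpa using (le_div_iff₀ (by positivity)).1 (hε.trans hεb)
  calc M * (exp T - 1)
      ≤ M * (T * exp T) := mul_le_mul_of_nonneg_left (exp_sub_one_le_mul_exp T) hM.le
    _ ≤ M * (exp ε * b * exp T) := by gcongr
    _ = a / 2 * exp (ε + T) := by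
        simp only [b, exp_add]
        field_simp
    _ ≤ a := by nlinarith

noncomputable def kpRadius (p : ℕ) (M : ℝ) : ℝ :=
  min (log M) (1 / ((p : ℝ) - 1))

noncomputable def kpNormBound (p : ℕ) (M : ℝ) : ℝ :=
  log M * ((p : ℝ) - 1) ^ p / (2 * (M * (p : ℝ)) ^ p * (1 + ((p : ℝ) - 1) * log M))

variable {p : ℕ} {M : ℝ}

lemma kpRadius_pos (hp : 2 ≤ p) (hM : 1 < M) : 0 < kpRadius p M := by
  have : (2 : ℝ) ≤ p := by exact_mod_cast hp
  exact lt_min (log_pos hM) (one_div_pos.2 (by linarith))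

/-- With `p = n + 1`, `a = kpRadius p M` and `L = log M`: since `a n ≤ 1`,
`((1 + a) n)^n ≤ (n + 1)^n`, and `L ≤ a (1 + n L)` because `a` is `L` or `1/n`. -/
lemma kpNormBound_mul_le (hp : 2 ≤ p) (hM : 1 < M) :
    kpNormBound p M * (M * (1 + kpRadius p M)) ^ (p - 1) ≤ kpRadius p M / (2 * M) := by
  obtain ⟨n, rfl⟩ : ∃ n, p = n + 1 := ⟨p - 1, by omega⟩
  have hn : (1 : ℝ) ≤ n := by exact_mod_cast (by omega : 1 ≤ n)
  have ha := kpRadius_pos hp hM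
  simp only [kpNormBound, Nat.add_sub_cancel, Nat.cast_add, Nat.cast_one, add_sub_cancel_right]
  set a := kpRadius (n + 1) M
  set L := log M
  have hL : 0 < L := log_pos hM
  have hM0 : 0 < M := by linarith
  have ha_eq : a = min L (1 / n) := by
    simp only [a, kpRadius, L, Nat.cast_add, Nat.cast_one, add_sub_cancel_right]
  have han : a * n ≤ 1 := by
    rw [← le_div_iff₀ (by linarith), ha_eq]
    exact min_le_right _ _
  have hLa : L ≤ a * (1 + n * L) := by
    rw [ha_eq, min_mul_of_nonneg _ _ (by positivity)]
    refine le_min (le_mul_of_one_le_right hL.le (le_add_of_nonneg_right (by positivity))) ?_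
    rw [one_div_mul_eq_div, le_div_iff₀ (by linarith)]
    nlinarith
  have hpow : ((1 + a) * n) ^ n ≤ ((n : ℝ) + 1) ^ n :=
    pow_le_pow_left₀ (by positivity) (by nlinarith) n
  rw [div_mul_eq_mul_div, div_le_div_iff₀ (by positivity) (by positivity)]
  calc L * (n : ℝ) ^ (n + 1) * (M * (1 + a)) ^ n * (2 * M)
      = 2 * M ^ (n + 1) * ((L * n) * ((1 + a) * n) ^ n) := by simp only [mul_pow, pow_succ]; ring
    _ ≤ 2 * M ^ (n + 1) * ((a * (1 + n * L) * (n + 1)) * (n + 1 : ℝ) ^ n) := by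
        gcongr
        nlinarith
    _ = a * (2 * (M * (n + 1 : ℝ)) ^ (n + 1) * (1 + n * L)) := by
        simp only [mul_pow, pow_succ]
        ring

lemma kpRadius_div_le (hM : 1 < M) : kpRadius p M / (2 * M) ≤ 1 / 5 := by
  have hM0 : 0 < M := by linarith
  have hlog : log M ≤ M / exp 1 := by
    have := log_le_sub_one_of_pos (div_pos hM0 (exp_pos 1))
    rw [log_div hM0.ne' (exp_pos 1).ne', log_exp] at this
    linarith
  have he : M / exp 1 ≤ 2 * M / 5 := by
    rw [div_le_iff₀ (exp_pos 1)]
    nlinarith [exp_one_gt_d9]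
  rw [div_le_iff₀ (by positivity)]
  linarith [show kpRadius p M ≤ log M from min_le_left _ _]

end Numerics

section KoteckyPreiss

open Real

variable {E : Type*} [Fintype E] [DecidableEq E] {K : Finset E → ℝ} {p : ℕ} {M : ℝ}

lemma sum_exp_abs_sub_one_mul_pow_le {ε c : ℝ} (hfin : ∀ X : Finset E, p < X.card → K X = 0)
    (e : E) (hK : ∑ X ∈ univ.filter (e ∈ ·), |K X| ≤ ε) (hc : 1 ≤ c) :
    ∑ X ∈ univ.filter (e ∈ ·), (exp |K X| - 1) * c ^ (X.card - 1) ≤ ε * exp ε * c ^ (p - 1) := by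
  have hc0 : 0 ≤ c := by linarith
  have hterm : ∀ X ∈ univ.filter (e ∈ ·),
      (exp |K X| - 1) * c ^ (X.card - 1) ≤ |K X| * (exp ε * c ^ (p - 1)) := by
    intro X hX
    by_cases hXp : p < X.card
    · simp [hfin X hXp]
    have hKε : |K X| ≤ ε := (single_le_sum (fun Y _ => abs_nonneg (K Y)) hX).trans hK
    calc (exp |K X| - 1) * c ^ (X.card - 1)
        ≤ (|K X| * exp ε) * c ^ (p - 1) :=
          mul_le_mul ((exp_sub_one_le_mul_exp _).trans
              (mul_le_mul_of_nonneg_left (exp_le_exp.2 hKε) (abs_nonneg _)))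
            (pow_le_pow_right₀ hc (by omega)) (by positivity)
            (by positivity)
      _ = |K X| * (exp ε * c ^ (p - 1)) := by ring
  calc ∑ X ∈ univ.filter (e ∈ ·), (exp |K X| - 1) * c ^ (X.card - 1)
      ≤ (∑ X ∈ univ.filter (e ∈ ·), |K X|) * (exp ε * c ^ (p - 1)) := by
        rw [sum_mul]
        exact sum_le_sum hterm
    _ ≤ ε * (exp ε * c ^ (p - 1)) := mul_le_mul_of_nonneg_right hK (by positivity)
    _ = ε * exp ε * c ^ (p - 1) := by ring

lemma kp_condition_of_norm_le (hp : 2 ≤ p) (hM : 1 < M)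
    (hfin : ∀ X : Finset E, p < X.card → K X = 0)
    (hK : ∀ e : E, ∑ X ∈ univ.filter (e ∈ ·), |K X| ≤ kpNormBound p M) (e : E) :
    M * (exp (∑ X ∈ univ.filter (e ∈ ·),
      (exp |K X| - 1) * (M * (1 + kpRadius p M)) ^ (X.card - 1)) - 1) ≤ kpRadius p M := by
  have hc : 1 ≤ M * (1 + kpRadius p M) := by nlinarith [kpRadius_pos hp hM]
  have hε : 0 ≤ kpNormBound p M := (sum_nonneg fun X _ => abs_nonneg (K X)).trans (hK e)
  calc M * (exp (∑ X ∈ univ.filter (e ∈ ·),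
        (exp |K X| - 1) * (M * (1 + kpRadius p M)) ^ (X.card - 1)) - 1)
      ≤ M * (exp (kpNormBound p M * exp (kpNormBound p M) *
          (M * (1 + kpRadius p M)) ^ (p - 1)) - 1) := by
        gcongr
        exact sum_exp_abs_sub_one_mul_pow_le hfin e (hK e) hc
    _ ≤ kpRadius p M := mul_exp_sub_one_le (by linarith) hε (one_le_pow₀ hc)
        (kpNormBound_mul_le hp hM) (kpRadius_div_le hM)

lemma sum_clusterV_mul_pow_eq (e : E) :
    ∑ N ∈ univ.filter (e ∈ ·), clusterV K N * M ^ N.card =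
      rootedClusterSum (fun X => exp |K X| - 1) M univ e := by
  rw [rootedClusterSum, ← sum_fiberwise_of_maps_to (g := fun Γ => Γ.sup id)
    (t := univ.filter (e ∈ ·))
    fun Γ hΓ => mem_filter.2 ⟨mem_univ _, (mem_rootedClusters.1 hΓ).2.2.1⟩]
  refine sum_congr rfl fun N hN => ?_
  rw [clusterV, sum_mul]
  refine sum_congr ?_ fun Γ hΓ => ?_
  · ext Γ
    simp only [mem_filter, mem_univ, true_and, mem_rootedClusters]
    constructor
    · rintro ⟨hne, hconn, rfl⟩
      exact ⟨⟨hne, hconn, (mem_filter.1 hN).2, subset_univ _⟩, rfl⟩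
    · rintro ⟨⟨hne, hconn, -, -⟩, hN⟩
      exact ⟨hne, hconn, hN⟩
  · rw [clusterWeight, (mem_filter.1 hΓ).2]

end KoteckyPreiss

end ClusterExpansion

open ClusterExpansion

/-- if the interaction `K` is finite-body (`K(X) = 0` for `|X| > p`) and its norm
`||K|| = sup_{e∈E} Σ_{X : e ∈ X} |K(X)|` satisfies
`||K|| ≤ (log M)(p−1)^p / (2(Mp)^p (1 + (p−1) log M))`, then the pointwise Kotecký–Preiss
condition holds: `Σ_{N : e ∈ N} v_N M^{|N|} ≤ log M` for every `e ∈ E`. -/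
theorem small_norm_implies_KP_condition {E : Type*} [Fintype E] [DecidableEq E]
    (p : ℕ) (hp : 2 ≤ p) (M : ℝ) (hM : 1 < M) (K : Finset E → ℝ)
    (hfin : ∀ X : Finset E, p < X.card → K X = 0)
    (hsmall : (⨆ e : E, ∑ X ∈ Finset.univ.filter (fun X : Finset E => e ∈ X), |K X|) ≤
      Real.log M * ((p : ℝ) - 1) ^ p /
        (2 * (M * (p : ℝ)) ^ p * (1 + ((p : ℝ) - 1) * Real.log M))) :
    ∀ e : E,
      ∑ N ∈ Finset.univ.filter (fun N : Finset E => e ∈ N),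
        clusterV K N * M ^ N.card ≤ Real.log M := by
  intro e
  have hK : ∀ f : E, ∑ X ∈ univ.filter (f ∈ ·), |K X| ≤ kpNormBound p M :=
    fun f => (le_ciSup (Set.finite_range _).bddAbove f).trans hsmall
  rw [sum_clusterV_mul_pow_eq]
  calc rootedClusterSum (fun X => Real.exp |K X| - 1) M univ e
      ≤ kpRadius p M :=
        rootedClusterSum_le_of_forall (fun X => sub_nonneg.2 (Real.one_le_exp (abs_nonneg _)))
          hM.le (kpRadius_pos hp hM).le (kp_condition_of_norm_le hp hM hfin hK) univ e
    _ ≤ Real.log M := min_le_left _ _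
end

section
/- Let p ≥ 2 be an integer and c > 0, and let (ā_n)_{n ≥ 1} be defined recursively by ā_n = c Σ_{k=0}^{p} C(p,k) Σ_{n_1 + … + n_k = n−1, n_i ≥ 1} ā_{n_1} ⋯ ā_{n_k}. Then for every n ≥ 1, ā_n ≤ (c·p^p)^n · (p−1)^{−(1 + (p−1)n)}. -/
/-!
Rescale: `g j = ā_j ε ^ j` with `ε = (p - 1) ^ (p - 1) / (c p ^ p)` satisfies the same recursion
with `c` replaced by `c ε`. Since every composition of `n - 1` has parts `< n`, the partial sums
`S N = g 1 + ⋯ + g N` obey `S (N + 1) ≤ c ε (S N + 1) ^ p`, and `ε` is chosen so that `1 / (p - 1)`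
is a fixed point of `x ↦ c ε (x + 1) ^ p`. Hence `S N ≤ 1 / (p - 1)` for all `N`, and in particular
`ā_n ε ^ n ≤ 1 / (p - 1)`, which is the bound.
-/

open Finset

def compositionTuples (k m : ℕ) : Finset (Fin k → ℕ) :=
  (Nat.antidiagonalTuple k m).filter fun t => ∀ i, 1 ≤ t i

def compositionSum {R : Type*} [CommSemiring R] (f : ℕ → R) (k m : ℕ) : R :=
  ∑ t ∈ compositionTuples k m, ∏ i, f (t i)

theorem mem_compositionTuples {k m : ℕ} {t : Fin k → ℕ} :
    t ∈ compositionTuples k m ↔ ∑ i, t i = m ∧ ∀ i, 1 ≤ t i := by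
  rw [compositionTuples, mem_filter, Nat.mem_antidiagonalTuple]

theorem mem_Icc_of_mem_compositionTuples {k m : ℕ} {t : Fin k → ℕ}
    (ht : t ∈ compositionTuples k m) (i : Fin k) : t i ∈ Icc 1 m := by
  rw [mem_compositionTuples] at ht
  exact mem_Icc.2 ⟨ht.2 i, ht.1 ▸ single_le_sum (fun _ _ => Nat.zero_le _) (mem_univ i)⟩

section CommSemiring

variable {R : Type*} [CommSemiring R]

theorem compositionSum_mul_pow (f : ℕ → R) (x : R) (k m : ℕ) :
    compositionSum (fun j => f j * x ^ j) k m = compositionSum f k m * x ^ m := by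
  rw [compositionSum, compositionSum, sum_mul]
  refine sum_congr rfl fun t ht => ?_
  rw [prod_mul_distrib, prod_pow_eq_pow_sum, (mem_compositionTuples.1 ht).1]

end CommSemiring

section OrderedSemiring

variable {R : Type*} [CommSemiring R] [PartialOrder R] [IsOrderedRing R]

theorem compositionSum_nonneg {f : ℕ → R} {k m : ℕ} (hf : ∀ j ∈ Icc 1 m, 0 ≤ f j) :
    0 ≤ compositionSum f k m :=
  sum_nonneg fun _ ht => prod_nonneg fun i _ => hf _ (mem_Icc_of_mem_compositionTuples ht i)

/-- The compositions of all `m ≤ n` into `k` parts form a subset of `[1, n] ^ k`. -/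
theorem sum_range_compositionSum_le_pow {f : ℕ → R} {n : ℕ} (hf : ∀ j ∈ Icc 1 n, 0 ≤ f j)
    (k : ℕ) : ∑ m ∈ range (n + 1), compositionSum f k m ≤ (∑ j ∈ Icc 1 n, f j) ^ k := by
  have hdisj : (range (n + 1) : Set ℕ).PairwiseDisjoint (compositionTuples k) := by
    intro a _ b _ hab
    refine disjoint_left.2 fun t hta htb => hab ?_
    rw [← (mem_compositionTuples.1 hta).1, (mem_compositionTuples.1 htb).1]
  simp only [compositionSum]
  rw [← Fin.prod_const, prod_univ_sum, ← sum_biUnion hdisj]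
  refine sum_le_sum_of_subset_of_nonneg (fun t ht => ?_) fun t ht _ => ?_
  · obtain ⟨m, hm, ht⟩ := mem_biUnion.1 ht
    refine Fintype.mem_piFinset.2 fun i => Icc_subset_Icc_right ?_
      (mem_Icc_of_mem_compositionTuples ht i)
    exact Nat.lt_succ_iff.1 (mem_range.1 hm)
  · exact prod_nonneg fun i _ => hf _ (Fintype.mem_piFinset.1 ht i)

variable {p : ℕ} {c : R} {a : ℕ → R}

theorem nonneg_of_eq_mul_sum_choose_compositionSum (hc : 0 ≤ c)
    (hrec : ∀ n, 1 ≤ n →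
      a n = c * ∑ k ∈ range (p + 1), (p.choose k : R) * compositionSum a k (n - 1)) :
    ∀ n, 1 ≤ n → 0 ≤ a n := by
  intro n
  induction n using Nat.strong_induction_on with
  | _ n ih =>
    intro hn
    rw [hrec n hn]
    refine mul_nonneg hc (sum_nonneg fun k _ => mul_nonneg (Nat.cast_nonneg _) ?_)
    refine compositionSum_nonneg fun j hj => ?_
    obtain ⟨hj1, hjn⟩ := mem_Icc.1 hj
    exact ih j (by omega) hj1

theorem sum_Icc_le_of_le_mul_sum_choose_compositionSum {s : R} (hc : 0 ≤ c) (hs : 0 ≤ s)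
    (hcs : c * (s + 1) ^ p ≤ s) (ha : ∀ n, 1 ≤ n → 0 ≤ a n)
    (hrec : ∀ n, 1 ≤ n →
      a n ≤ c * ∑ k ∈ range (p + 1), (p.choose k : R) * compositionSum a k (n - 1)) :
    ∀ N, ∑ j ∈ Icc 1 N, a j ≤ s := by
  intro N
  induction N with
  | zero => simpa using hs
  | succ N ih =>
    have hS : 0 ≤ ∑ j ∈ Icc 1 N, a j := sum_nonneg fun j hj => ha j (mem_Icc.1 hj).1
    calc ∑ j ∈ Icc 1 (N + 1), a j = ∑ m ∈ range (N + 1), a (m + 1) := by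
          rw [range_eq_Ico, sum_Ico_add']; rfl
      _ ≤ ∑ m ∈ range (N + 1),
            c * ∑ k ∈ range (p + 1), (p.choose k : R) * compositionSum a k m :=
          sum_le_sum fun m _ => hrec (m + 1) m.succ_pos
      _ = c * ∑ k ∈ range (p + 1), (p.choose k : R) *
            ∑ m ∈ range (N + 1), compositionSum a k m := by
          simp only [mul_sum]
          rw [sum_comm]
      _ ≤ c * ∑ k ∈ range (p + 1), (p.choose k : R) * (∑ j ∈ Icc 1 N, a j) ^ k := by
          gcongr with k
          exact sum_range_compositionSum_le_pow (fun j hj => ha j (mem_Icc.1 hj).1) k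
      _ = c * (∑ j ∈ Icc 1 N, a j + 1) ^ p := by
          rw [add_pow]
          exact congrArg _ (sum_congr rfl fun k _ => by rw [one_pow, mul_one, mul_comm])
      _ ≤ c * (s + 1) ^ p := by
          gcongr
          exact add_nonneg hS zero_le_one
      _ ≤ s := hcs

end OrderedSemiring

/-- the sequence `(ā_n)` defined by the recursion
`ā_n = c Σ_{k=0}^p C(p,k) Σ_{n_1+…+n_k = n−1, n_i ≥ 1} ā_{n_1} ⋯ ā_{n_k}` satisfies
`ā_n ≤ (c·p^p)^n · (p−1)^{−(1+(p−1)n)}` for every `n ≥ 1`. -/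
theorem abar_coefficient_bound (p : ℕ) (hp : 2 ≤ p) (c : ℝ) (hc : 0 < c)
    (abar : ℕ → ℝ)
    (hrec : ∀ n : ℕ, 1 ≤ n →
      abar n = c * ∑ k ∈ Finset.range (p + 1), (p.choose k : ℝ) *
        ∑ t ∈ (Finset.Nat.antidiagonalTuple k (n - 1)).filter (fun t => ∀ i, 1 ≤ t i),
          ∏ i, abar (t i)) :
    ∀ n : ℕ, 1 ≤ n →
      abar n ≤ (c * (p : ℝ) ^ p) ^ n / ((p : ℝ) - 1) ^ (1 + (p - 1) * n) := by
  intro n hn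
  set q : ℝ := p - 1 with hq_def
  have hq : 0 < q := by
    have : (2 : ℝ) ≤ p := by exact_mod_cast hp
    linarith
  set ε := q ^ (p - 1) / (c * p ^ p) with hε_def
  have hε : 0 < ε := by positivity
  have hrec' : ∀ n, 1 ≤ n →
      abar n = c * ∑ k ∈ range (p + 1), (p.choose k : ℝ) * compositionSum abar k (n - 1) := hrec
  have habar := nonneg_of_eq_mul_sum_choose_compositionSum hc.le hrec'
  have hscaled : ∀ j, 1 ≤ j → abar j * ε ^ j ≤ c * ε * ∑ k ∈ range (p + 1),
      (p.choose k : ℝ) * compositionSum (fun i => abar i * ε ^ i) k (j - 1) := by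
    intro j hj
    obtain ⟨i, rfl⟩ : ∃ i, j = i + 1 := ⟨j - 1, by omega⟩
    simp only [compositionSum_mul_pow, ← mul_assoc, ← sum_mul, hrec' (i + 1) hj,
      Nat.add_sub_cancel, pow_succ]
    exact le_of_eq (by ring)
  have hfix : c * ε * (q⁻¹ + 1) ^ p ≤ q⁻¹ := by
    refine le_of_eq ?_
    have : q⁻¹ + 1 = p / q := by field_simp; linarith
    rw [this, div_pow, hε_def, pow_sub₀ q hq.ne' (by omega : 1 ≤ p), pow_one]
    field_simp
  have hsum := sum_Icc_le_of_le_mul_sum_choose_compositionSum (mul_pos hc hε).le (by positivity)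
    hfix (fun j hj => mul_nonneg (habar j hj) (by positivity)) hscaled n
  have hscaled_n : abar n * ε ^ n ≤ q⁻¹ :=
    (single_le_sum (fun j hj => mul_nonneg (habar j (mem_Icc.1 hj).1) (by positivity))
      (mem_Icc.2 ⟨hn, le_rfl⟩)).trans hsum
  calc abar n ≤ q⁻¹ / ε ^ n := (le_div_iff₀ (by positivity)).2 hscaled_n
    _ = (c * p ^ p) ^ n / q ^ (1 + (p - 1) * n) := by
      rw [hε_def, div_pow, pow_add, pow_mul]
      field_simp
end

section
/- Let p ≥ 2 be an integer and consider the function F(M) = (log M)(p−1)^p / (2(Mp)^p(1 + (p−1) log M)) for M ∈ (1, ∞). Then F attains its maximum over (1,∞) at the unique M* with log M* = (−p + √(5p² − 4p)) / (2p(p−1)). -/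
/-!
Substituting `u = log M` turns `F` into a positive multiple of `u / (exp (p u) (1 + (p - 1) u))`.
Its critical point `t` is the positive root of `p (p - 1) t² + p t = 1`, and comparing with `t`
needs only the tangent-line bound `exp (p (u - t)) ≥ 1 + p (u - t)`: with the quadratic relation
the remaining polynomial gap is `p (p - 1) t (u - t)²`, so `t` is the strict global maximiser.
-/

open Real

section StrictMax

variable {α β : Type*} [Preorder β] {f : α → β} {s : Set α} {x : α}

lemma isMaxOn_of_forall_ne_lt (hlt : ∀ z ∈ s, z ≠ x → f z < f x) : IsMaxOn f s x := by
  intro z hz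
  rcases eq_or_ne z x with rfl | hne
  · exact le_rfl
  · exact (hlt z hz hne).le

lemma IsMaxOn.eq_of_forall_ne_lt {y : α} (hmax : IsMaxOn f s y)
    (hlt : ∀ z ∈ s, z ≠ x → f z < f x) (hy : y ∈ s) (hx : x ∈ s) : y = x := by
  by_contra hne
  exact lt_irrefl _ ((hlt y hy hne).trans_le (hmax hx))

end StrictMax

section Profile

variable {r a t u : ℝ}

lemma quadratic_gap_lt (hr : 0 < r) (ha : 0 < a) (ht : 0 < t)
    (hroot : r * a * t ^ 2 + r * t = 1) (hne : u ≠ t) :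
    u * (1 + a * t) < (1 + r * (u - t)) * (t * (1 + a * u)) := by
  have hpos : 0 < r * a * t * (u - t) ^ 2 := by
    have := sub_ne_zero.mpr hne
    positivity
  linear_combination hpos + (t - u) * hroot

lemma div_exp_mul_lt_of_quadratic (hr : 0 < r) (ha : 0 < a) (ht : 0 < t) (hau : 0 < 1 + a * u)
    (hroot : r * a * t ^ 2 + r * t = 1) (hne : u ≠ t) :
    u / (exp (r * u) * (1 + a * u)) < t / (exp (r * t) * (1 + a * t)) := by
  have htangent : exp (r * t) * (1 + r * (u - t)) ≤ exp (r * u) := by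
    calc exp (r * t) * (1 + r * (u - t)) ≤ exp (r * t) * exp (r * (u - t)) := by
          gcongr; linarith [add_one_le_exp (r * (u - t))]
      _ = exp (r * u) := by rw [← exp_add]; ring_nf
  rw [div_lt_div_iff₀ (by positivity) (by positivity)]
  calc u * (exp (r * t) * (1 + a * t))
      = exp (r * t) * (u * (1 + a * t)) := by ring
    _ < exp (r * t) * ((1 + r * (u - t)) * (t * (1 + a * u))) :=
      mul_lt_mul_of_pos_left (quadratic_gap_lt hr ha ht hroot hne) (exp_pos _)
    _ = exp (r * t) * (1 + r * (u - t)) * (t * (1 + a * u)) := by ring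
    _ ≤ exp (r * u) * (t * (1 + a * u)) := by gcongr
    _ = t * (exp (r * u) * (1 + a * u)) := by ring

end Profile

lemma threshold_root_spec {r : ℝ} (hr : 1 < r) :
    let t := (-r + √(5 * r ^ 2 - 4 * r)) / (2 * r * (r - 1))
    0 < t ∧ r * (r - 1) * t ^ 2 + r * t = 1 := by
  intro t
  have hdisc : √(5 * r ^ 2 - 4 * r) ^ 2 = 5 * r ^ 2 - 4 * r := sq_sqrt (by nlinarith)
  have hsqrt : r < √(5 * r ^ 2 - 4 * r) := by nlinarith [sqrt_nonneg (5 * r ^ 2 - 4 * r)]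
  have hden : 0 < 2 * r * (r - 1) := by nlinarith
  refine ⟨div_pos (by linarith) hden, ?_⟩
  have hr1 : r - 1 ≠ 0 := by linarith
  simp only [t]
  -- otherwise `field_simp` also rewrites the radicand and `hdisc` no longer matches
  generalize √(5 * r ^ 2 - 4 * r) = s at hdisc
  field_simp
  linear_combination hdisc

lemma threshold_eq_mul_profile (p : ℕ) {M : ℝ} (hM : 0 < M) :
    log M * ((p : ℝ) - 1) ^ p / (2 * (M * p) ^ p * (1 + ((p : ℝ) - 1) * log M)) =
      ((p : ℝ) - 1) ^ p / (2 * (p : ℝ) ^ p) *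
        (log M / (exp (p * log M) * (1 + ((p : ℝ) - 1) * log M))) := by
  rw [exp_nat_mul, exp_log hM, mul_pow]
  simp only [div_eq_mul_inv, mul_inv]
  ring

/-- for an integer `p ≥ 2`, the function
`F(M) = (log M)(p−1)^p / (2(Mp)^p (1 + (p−1) log M))` on `(1,∞)` attains its maximum at the
unique `M*` with `log M* = (−p + √(5p² − 4p)) / (2p(p−1))`. -/
theorem threshold_function_max (p : ℕ) (hp : 2 ≤ p) :
    ∃ Mstar : ℝ, (1 < Mstar ∧
        Real.log Mstar =
          (-(p : ℝ) + Real.sqrt (5 * (p : ℝ) ^ 2 - 4 * (p : ℝ))) /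
            (2 * (p : ℝ) * ((p : ℝ) - 1))) ∧
      IsMaxOn
        (fun M : ℝ => Real.log M * ((p : ℝ) - 1) ^ p /
          (2 * (M * (p : ℝ)) ^ p * (1 + ((p : ℝ) - 1) * Real.log M)))
        (Set.Ioi 1) Mstar ∧
      ∀ M ∈ Set.Ioi (1 : ℝ),
        IsMaxOn
          (fun M : ℝ => Real.log M * ((p : ℝ) - 1) ^ p /
            (2 * (M * (p : ℝ)) ^ p * (1 + ((p : ℝ) - 1) * Real.log M)))
          (Set.Ioi 1) M → M = Mstar := by
  set F : ℝ → ℝ := fun M => Real.log M * ((p : ℝ) - 1) ^ p /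
    (2 * (M * (p : ℝ)) ^ p * (1 + ((p : ℝ) - 1) * Real.log M))
  have hp1 : (1 : ℝ) < p := by exact_mod_cast hp
  obtain ⟨ht, hroot⟩ := threshold_root_spec hp1
  set t := (-(p : ℝ) + √(5 * (p : ℝ) ^ 2 - 4 * p)) / (2 * p * ((p : ℝ) - 1))
  have hmem : exp t ∈ Set.Ioi (1 : ℝ) := one_lt_exp_iff.mpr ht
  have hlt : ∀ M ∈ Set.Ioi (1 : ℝ), M ≠ exp t → F M < F (exp t) := by
    intro M (hM : 1 < M) hne
    have hlog_ne : log M ≠ t := fun h => hne (by rw [← h, exp_log (by linarith)])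
    have hcoef : 0 < ((p : ℝ) - 1) ^ p / (2 * (p : ℝ) ^ p) :=
      div_pos (pow_pos (by linarith) p) (by positivity)
    simp only [F]
    rw [threshold_eq_mul_profile p (by linarith), threshold_eq_mul_profile p (exp_pos t), log_exp]
    exact mul_lt_mul_of_pos_left (div_exp_mul_lt_of_quadratic (by linarith) (by linarith) ht
      (by nlinarith [log_pos hM]) hroot hlog_ne) hcoef
  exact ⟨exp t, ⟨hmem, log_exp t⟩, isMaxOn_of_forall_ne_lt hlt,
    fun M hM hmax => hmax.eq_of_forall_ne_lt hlt hM hmem⟩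
end
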